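/- arXiv:1408.3706 — 9 statements merged into one kernel-verified Lean document; each statement's English description precedes it below -/
import Mathlib

section
/- Let A be a finite-dimensional associative unital ℝ-algebra of dimension N ≥ 1, let τ(u) denote the trace of the ℝ-linear map v ↦ uv on A, let g := {u ∈ A : τ(u) = 0}, and for X, Y ∈ g set ∇_X Y := XY − (τ(XY)/N)·1 and γ(X,Y) := −τ(XY)/N. Then for all X, Y, Z ∈ g the curvature R(X,Y)Z := ∇_X(∇_Y Z) − ∇_Y(∇_X Z) − ∇_{[X,Y]}Z satisfies R(X,Y)Z = γ(Y,Z)·X − γ(X,Z)·Y. -/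
/-!
Write `φ := τ / N`, so that `∇_X Y = XY - φ(XY)·1`. Left multiplication by `X` turns the
correction term `-φ(YZ)·1` of `∇_Y Z` into `-φ(YZ)·X`, which `φ` kills as `φ X = 0`, so
`∇_X ∇_Y Z = ∇_X (YZ) - φ(YZ)·X`. Since `∇` is additive in its first argument and `A` is
associative, `∇_{[X,Y]} Z = ∇_X (YZ) - ∇_Y (XZ)`, and only the two correction terms survive.
-/

def curvature {A : Type*} [Ring A] (nab : A → A → A) (X Y Z : A) : A :=
  nab X (nab Y Z) - nab Y (nab X Z) - nab ⁅X, Y⁆ Z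

namespace Module.Dual

variable {R A : Type*} [CommRing R] [Ring A] [Algebra R A]

def connection (φ : Module.Dual R A) (X Y : A) : A := X * Y - φ (X * Y) • 1

variable (φ : Module.Dual R A)

theorem connection_sub_left (X X' Z : A) :
    φ.connection (X - X') Z = φ.connection X Z - φ.connection X' Z := by
  simp only [connection, sub_mul, map_sub, sub_smul]
  abel

theorem connection_sub_smul_one {X : A} (hX : φ X = 0) (W : A) (r : R) :
    φ.connection X (W - r • 1) = φ.connection X W - r • X := by
  simp only [connection, mul_sub, mul_smul_comm, mul_one, map_sub, map_smul, hX, smul_zero,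
    sub_zero]
  abel

theorem connection_connection {X : A} (hX : φ X = 0) (Y Z : A) :
    φ.connection X (φ.connection Y Z) = φ.connection X (Y * Z) - φ (Y * Z) • X :=
  φ.connection_sub_smul_one hX _ _

theorem connection_lie (X Y Z : A) :
    φ.connection ⁅X, Y⁆ Z = φ.connection X (Y * Z) - φ.connection Y (X * Z) := by
  rw [Ring.lie_def, connection_sub_left, connection, connection, connection, connection,
    mul_assoc, mul_assoc]

theorem curvature_connection {X Y : A} (hX : φ X = 0) (hY : φ Y = 0) (Z : A) :
    curvature φ.connection X Y Z = φ (X * Z) • Y - φ (Y * Z) • X := by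
  rw [curvature, connection_connection φ hX, connection_connection φ hY, connection_lie]
  abel

end Module.Dual

theorem curvature_of_trace_connection_general
    (A : Type*) [Ring A] [Algebra ℝ A]
    (N : ℕ)
    (τ : A → ℝ) (hτ : ∀ u, τ u = LinearMap.trace ℝ A (LinearMap.mulLeft ℝ u))
    (nab : A → A → A)
    (hnab : ∀ X Y, nab X Y = X * Y - (τ (X * Y) / (N : ℝ)) • (1 : A))
    (γ : A → A → ℝ) (hγ : ∀ X Y, γ X Y = -(τ (X * Y)) / (N : ℝ))
    (X Y Z : A) (hX : τ X = 0) (hY : τ Y = 0) :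
    nab X (nab Y Z) - nab Y (nab X Z) - nab (X * Y - Y * X) Z
      = γ Y Z • X - γ X Z • Y := by
  set φ : Module.Dual ℝ A := (N : ℝ)⁻¹ • (LinearMap.trace ℝ A).comp (LinearMap.mul ℝ A)
  have hφ : ∀ u, φ u = τ u / N := fun u => by
    rw [hτ, div_eq_inv_mul]
    rfl
  have hnab_eq : nab = φ.connection := by
    funext X Y
    rw [hnab, Module.Dual.connection, hφ]
  have hφX : φ X = 0 := by rw [hφ, hX, zero_div]
  have hφY : φ Y = 0 := by rw [hφ, hY, zero_div]
  have hR := φ.curvature_connection hφX hφY Z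
  rw [curvature, Ring.lie_def, ← hnab_eq, hφ, hφ] at hR
  rw [hR, hγ, hγ, neg_div, neg_div, neg_smul, neg_smul]
  abel

/-- For a finite-dimensional associative unital ℝ-algebra `A` of dimension
`N ≥ 1`, with `τ u` the trace of left multiplication by `u`, the product
`∇_X Y := XY − (τ(XY)/N)·1` on `g = ker τ` has curvature
`R(X,Y)Z = γ(Y,Z)·X − γ(X,Z)·Y` where `γ(X,Y) = −τ(XY)/N`. -/
theorem curvature_of_trace_connection
    (A : Type*) [Ring A] [Algebra ℝ A] [FiniteDimensional ℝ A]
    (N : ℕ) (hN : N = Module.finrank ℝ A) (hN1 : 1 ≤ N)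
    (τ : A → ℝ) (hτ : ∀ u, τ u = LinearMap.trace ℝ A (LinearMap.mulLeft ℝ u))
    (nab : A → A → A)
    (hnab : ∀ X Y, nab X Y = X * Y - (τ (X * Y) / (N : ℝ)) • (1 : A))
    (γ : A → A → ℝ) (hγ : ∀ X Y, γ X Y = -(τ (X * Y)) / (N : ℝ))
    (X Y Z : A) (hX : τ X = 0) (hY : τ Y = 0) (hZ : τ Z = 0) :
    nab X (nab Y Z) - nab Y (nab X Z) - nab (X * Y - Y * X) Z
      = γ Y Z • X - γ X Z • Y :=
  curvature_of_trace_connection_general A N τ hτ nab hnab γ hγ X Y Z hX hY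
end

section
/- Let A be a finite-dimensional associative unital ℝ-algebra of dimension N ≥ 2, τ the trace of left multiplication, g := ker τ, ∇_X Y := XY − (τ(XY)/N)·1, and R the curvature of ∇. Then for all X, Y ∈ g the linear map Z ↦ R(Z,X)Y maps g into g, and the Ricci tensor Ric(X,Y) := tr_g(Z ↦ R(Z,X)Y) equals −((N−2)/N)·τ(XY); in particular Ric is symmetric. -/
/-!
For `X, Z` in `g = ker τ` all multiples of `1` in the curvature cancel, leaving
`R(Z,X)Y = (τ(ZY)/N) X - (τ(XY)/N) Z`. Hence `Z ↦ R(Z,X)Y` is a rank-one map plus the scalar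
`-τ(XY)/N`, whose trace over the hyperplane `g` (of dimension `N - 1`) is
`τ(XY)/N - (N - 1) τ(XY)/N`.
-/

open LinearMap Module

namespace TraceConnection

variable {K A : Type*} [Field K] [Ring A] [Algebra K A]

def nabla (τ : A →ₗ[K] K) (n : K) (X Y : A) : A := X * Y - (τ (X * Y) / n) • 1

def curvature (τ : A →ₗ[K] K) (n : K) (X Y Z : A) : A :=
  nabla τ n X (nabla τ n Y Z) - nabla τ n Y (nabla τ n X Z) - nabla τ n (X * Y - Y * X) Z

variable {τ : A →ₗ[K] K} {n : K}

lemma curvature_eq_of_apply_eq_zero {X Z : A} (hX : τ X = 0) (hZ : τ Z = 0) (Y : A) :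
    curvature τ n Z X Y = (τ (Z * Y) / n) • X - (τ (X * Y) / n) • Z := by
  simp only [curvature, nabla, mul_sub, sub_mul, mul_smul_comm, mul_one,
    map_sub, map_smul, smul_eq_mul, hX, hZ, mul_zero, sub_zero, mul_assoc]
  module

lemma curvature_mem_ker {X Z : A} (hX : τ X = 0) (hZ : τ Z = 0) (Y : A) :
    curvature τ n Z X Y ∈ ker τ := by
  simp [curvature_eq_of_apply_eq_zero hX hZ, hX, hZ]

lemma trace_curvature [FiniteDimensional K A] {X Y : A} (hX : τ X = 0)
    {F : ker τ →ₗ[K] ker τ} (hF : ∀ Z : ker τ, (F Z : A) = curvature τ n Z X Y) :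
    trace K (ker τ) F = τ (X * Y) / n * (1 - finrank K (ker τ)) := by
  let φ : ker τ →ₗ[K] K := n⁻¹ • (τ ∘ₗ mulRight K Y ∘ₗ (ker τ).subtype)
  have hF_eq : F = φ.smulRight ⟨X, mem_ker.mpr hX⟩ - (τ (X * Y) / n) • LinearMap.id := by
    ext Z
    simp [hF, curvature_eq_of_apply_eq_zero hX Z.2, φ, div_eq_inv_mul]
  rw [hF_eq, map_sub (trace K (ker τ)), map_smul, trace_smulRight, trace_id]
  simp only [φ, LinearMap.smul_apply, comp_apply, Submodule.coe_subtype, mulRight_apply,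
    smul_eq_mul]
  ring

end TraceConnection

open TraceConnection

theorem ricci_of_trace_connection_general
    (A : Type*) [Ring A] [Algebra ℝ A] [FiniteDimensional ℝ A]
    (N : ℕ) (hN : N = Module.finrank ℝ A) (hN2 : 2 ≤ N)
    (τ : A →ₗ[ℝ] ℝ) (hτ : ∀ u, τ u = LinearMap.trace ℝ A (LinearMap.mulLeft ℝ u))
    (g : Submodule ℝ A) (hg : g = LinearMap.ker τ)
    (nab : A → A → A)
    (hnab : ∀ X Y, nab X Y = X * Y - (τ (X * Y) / (N : ℝ)) • (1 : A))
    (R : A → A → A → A)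
    (hR : ∀ X Y Z, R X Y Z
      = nab X (nab Y Z) - nab Y (nab X Z) - nab (X * Y - Y * X) Z)
    (X Y : A) (hX : X ∈ g) :
    (∀ Z ∈ g, R Z X Y ∈ g) ∧
    (∀ F : g →ₗ[ℝ] g, (∀ Z : g, (F Z : A) = R (Z : A) X Y) →
      LinearMap.trace ℝ g F = -(((N : ℝ) - 2) / (N : ℝ)) * τ (X * Y)) := by
  subst hg
  obtain rfl : nab = nabla τ N := funext₂ hnab
  obtain rfl : R = curvature τ N := funext₃ hR
  have hτ1 : τ 1 = N := by rw [hτ, mulLeft_one, trace_id, hN]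
  have hτ0 : τ ≠ 0 := ne_of_apply_ne (· 1) (by simp [hτ1]; omega)
  have hdim : (finrank ℝ (ker τ) : ℝ) + 1 = N := by
    rw [hN]; exact_mod_cast Dual.finrank_ker_add_one_of_ne_zero hτ0
  refine ⟨fun Z hZ => curvature_mem_ker (mem_ker.mp hX) (mem_ker.mp hZ) Y, fun F hF => ?_⟩
  rw [trace_curvature hX hF, ← hdim]
  ring

/-- For a finite-dimensional associative unital ℝ-algebra `A` of dimension
`N ≥ 2`, with `τ` the trace of left multiplication, `g = ker τ`, and
`∇_X Y := XY − (τ(XY)/N)·1` with curvature `R`, for all `X, Y ∈ g` the map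
`Z ↦ R(Z,X)Y` sends `g` into `g`, and its trace over `g` (the Ricci tensor) equals
`−((N−2)/N)·τ(XY)`; in particular the Ricci tensor is symmetric. -/
theorem ricci_of_trace_connection
    (A : Type*) [Ring A] [Algebra ℝ A] [FiniteDimensional ℝ A]
    (N : ℕ) (hN : N = Module.finrank ℝ A) (hN2 : 2 ≤ N)
    (τ : A →ₗ[ℝ] ℝ) (hτ : ∀ u, τ u = LinearMap.trace ℝ A (LinearMap.mulLeft ℝ u))
    (g : Submodule ℝ A) (hg : g = LinearMap.ker τ)
    (nab : A → A → A)
    (hnab : ∀ X Y, nab X Y = X * Y - (τ (X * Y) / (N : ℝ)) • (1 : A))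
    (R : A → A → A → A)
    (hR : ∀ X Y Z, R X Y Z
      = nab X (nab Y Z) - nab Y (nab X Z) - nab (X * Y - Y * X) Z)
    (X Y : A) (hX : X ∈ g) (hY : Y ∈ g) :
    (∀ Z ∈ g, R Z X Y ∈ g) ∧
    (∀ F : g →ₗ[ℝ] g, (∀ Z : g, (F Z : A) = R (Z : A) X Y) →
      LinearMap.trace ℝ g F = -(((N : ℝ) - 2) / (N : ℝ)) * τ (X * Y)) :=
  ricci_of_trace_connection_general A N hN hN2 τ hτ g hg nab hnab R hR X Y hX
end

section
/- Let l be an n-dimensional real Lie algebra with n ≥ 2 and ∇ a torsion-free bilinear product on l. Define f : l → End_ℝ(l × ℝ) by f(X)(Z, t) := (∇_X Z − a_X·Z + t·X, −P(X,Z) − a_X·t), where a_X := tr(∇_X)/(n+1) is 1/(n+1) times the trace of the endomorphism Y ↦ ∇_X Y. Then f is a homomorphism of Lie algebras (where End_ℝ(l × ℝ) carries the commutator bracket) if and only if both (i) the Weyl projective curvature W vanishes identically and (ii) the Codazzi identity P(X, ∇_Y Z) − P(Y, ∇_X Z) − P([X,Y], Z) = 0 holds for all X, Y, Z ∈ l.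 -/
noncomputable section

/-- The curvature `R(X,Y)Z` of a bilinear product `∇` on a Lie algebra. -/
def curv {l : Type*} [LieRing l] [LieAlgebra ℝ l]
    (nab : l →ₗ[ℝ] l →ₗ[ℝ] l) (X Y Z : l) : l :=
  nab X (nab Y Z) - nab Y (nab X Z) - nab ⁅X, Y⁆ Z

/-- The endomorphism `Z ↦ R(Z,X)Y`. -/
def ricMap {l : Type*} [LieRing l] [LieAlgebra ℝ l]
    (nab : l →ₗ[ℝ] l →ₗ[ℝ] l) (X Y : l) : l →ₗ[ℝ] l :=
  nab.flip (nab X Y) - (nab X) ∘ₗ (nab.flip Y)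
    + (nab.flip Y) ∘ₗ (LieAlgebra.ad ℝ l X)

/-- The Ricci tensor `Ric(X,Y) = tr(Z ↦ R(Z,X)Y)`. -/
def ric {l : Type*} [LieRing l] [LieAlgebra ℝ l]
    (nab : l →ₗ[ℝ] l →ₗ[ℝ] l) (X Y : l) : ℝ :=
  LinearMap.trace ℝ l (ricMap nab X Y)

/-- The tensor `P(X,Y) = (1/(n²−1))·(n·Ric(X,Y) + Ric(Y,X))` with `n = dim l`. -/
def pT {l : Type*} [LieRing l] [LieAlgebra ℝ l]
    (nab : l →ₗ[ℝ] l →ₗ[ℝ] l) (X Y : l) : ℝ :=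
  (1 / ((Module.finrank ℝ l : ℝ) ^ 2 - 1))
    * ((Module.finrank ℝ l : ℝ) * ric nab X Y + ric nab Y X)

/-- The Weyl projective curvature
`W(X,Y)Z = R(X,Y)Z + (P(X,Y) − P(Y,X))·Z − P(Y,Z)·X + P(X,Z)·Y`. -/
def weyl {l : Type*} [LieRing l] [LieAlgebra ℝ l]
    (nab : l →ₗ[ℝ] l →ₗ[ℝ] l) (X Y Z : l) : l :=
  curv nab X Y Z + (pT nab X Y - pT nab Y X) • Z - pT nab Y Z • X + pT nab X Z • Y

/-!
Expanding `[f X, f Y] − f [X,Y]` on `(Z, t)`, all products `a_X a_Y` cancel and torsion-freeness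
removes the `t·[X,Y]` terms, so only the curvature and `a_{[X,Y]}` survive. Tracing the first
Bianchi identity gives `tr ∇_{[X,Y]} = Ric(X,Y) − Ric(Y,X)`, i.e. `a_{[X,Y]} = P(X,Y) − P(Y,X)`.
With this the `l`-component of `[f X, f Y] − f [X,Y]` is `W(X,Y)Z` and its `ℝ`-component is minus
the Codazzi expression, whatever `t` is.
-/

section Curvature

variable {l : Type*} [LieRing l] [LieAlgebra ℝ l] (nab : l →ₗ[ℝ] l →ₗ[ℝ] l)

lemma ricMap_apply (X Y Z : l) : ricMap nab X Y Z = curv nab Z X Y := by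
  simp only [ricMap, curv, LinearMap.add_apply, LinearMap.sub_apply, LinearMap.comp_apply,
    LinearMap.flip_apply, LieAlgebra.ad_apply, ← lie_skew Z X, map_neg, LinearMap.neg_apply]
  abel

lemma curv_swap (X Y Z : l) : curv nab Y X Z = -curv nab X Y Z := by
  simp only [curv, ← lie_skew X Y, map_neg, LinearMap.neg_apply]
  abel

lemma curv_cyclic (tf : ∀ X Y : l, nab X Y - nab Y X = ⁅X, Y⁆) (X Y Z : l) :
    curv nab X Y Z + curv nab Y Z X + curv nab Z X Y = 0 := by
  have nab_tf (A B C : l) : nab A (nab B C) - nab A (nab C B) = nab A ⁅B, C⁆ := by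
    rw [← map_sub, tf]
  simp only [curv]
  linear_combination (norm := module) nab_tf X Y Z + nab_tf Y Z X + nab_tf Z X Y
    + tf X ⁅Y, Z⁆ + tf Y ⁅Z, X⁆ + tf Z ⁅X, Y⁆ + lie_jacobi X Y Z

def ricForm : l →ₗ[ℝ] l →ₗ[ℝ] ℝ :=
  (LinearMap.mk₂ ℝ (ricMap nab)
    (fun X X' Y => by
      ext Z; simp only [ricMap_apply, curv, LinearMap.add_apply, map_add, lie_add]; abel)
    (fun c X Y => by
      ext Z; simp only [ricMap_apply, curv, LinearMap.smul_apply, map_smul, lie_smul]; module)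
    (fun X Y Y' => by
      ext Z; simp only [ricMap_apply, curv, LinearMap.add_apply, map_add]; abel)
    (fun c X Y => by
      ext Z; simp only [ricMap_apply, curv, LinearMap.smul_apply, map_smul]; module)).compr₂
    (LinearMap.trace ℝ l)

def pForm : l →ₗ[ℝ] l →ₗ[ℝ] ℝ :=
  (1 / ((Module.finrank ℝ l : ℝ) ^ 2 - 1)) •
    ((Module.finrank ℝ l : ℝ) • ricForm nab + (ricForm nab).flip)

lemma pForm_apply (X Y : l) : pForm nab X Y = pT nab X Y := by
  simp only [pForm, one_div, ricForm, smul_add, LinearMap.add_apply, LinearMap.smul_apply,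
    LinearMap.compr₂_apply, LinearMap.mk₂_apply, smul_eq_mul, LinearMap.flip_apply, pT, ric]
  ring

lemma pT_add_right (X Y Y' : l) : pT nab X (Y + Y') = pT nab X Y + pT nab X Y' := by
  simp only [← pForm_apply, map_add]

lemma pT_sub_right (X Y Y' : l) : pT nab X (Y - Y') = pT nab X Y - pT nab X Y' := by
  simp only [← pForm_apply, map_sub]

lemma pT_smul_right (c : ℝ) (X Y : l) : pT nab X (c • Y) = c * pT nab X Y := by
  simp only [← pForm_apply, map_smul, smul_eq_mul]

lemma trace_nab_lie (tf : ∀ X Y : l, nab X Y - nab Y X = ⁅X, Y⁆) (X Y : l) :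
    LinearMap.trace ℝ l (nab ⁅X, Y⁆) = ric nab X Y - ric nab Y X := by
  have curv_eq :
      nab X * nab Y - nab Y * nab X - nab ⁅X, Y⁆ = ricMap nab Y X - ricMap nab X Y := by
    ext Z
    simp only [LinearMap.sub_apply, Module.End.mul_apply, ricMap_apply, curv_swap nab Y Z]
    have h := curv_cyclic nab tf X Y Z
    simp only [curv] at h ⊢
    linear_combination (norm := module) h
  have h := congrArg (LinearMap.trace ℝ l) curv_eq
  rw [map_sub, map_sub, map_sub, LinearMap.trace_mul_comm, sub_self, zero_sub] at h
  simp only [ric]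
  linarith

lemma pT_sub_pT_swap [FiniteDimensional ℝ l] (hn : 2 ≤ Module.finrank ℝ l)
    (tf : ∀ X Y : l, nab X Y - nab Y X = ⁅X, Y⁆) (X Y : l) :
    pT nab X Y - pT nab Y X =
      LinearMap.trace ℝ l (nab ⁅X, Y⁆) / ((Module.finrank ℝ l : ℝ) + 1) := by
  have hn' : (2 : ℝ) ≤ Module.finrank ℝ l := by exact_mod_cast hn
  have h1 : (Module.finrank ℝ l : ℝ) + 1 ≠ 0 := by linarith
  have h2 : (Module.finrank ℝ l : ℝ) ^ 2 - 1 ≠ 0 := by nlinarith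
  rw [trace_nab_lie nab tf, pT, pT]
  field_simp
  ring

end Curvature

lemma lie_sub_map_lie_apply {l : Type*} [LieRing l] [LieAlgebra ℝ l] (nab : l →ₗ[ℝ] l →ₗ[ℝ] l)
    (tf : ∀ X Y : l, nab X Y - nab Y X = ⁅X, Y⁆) (a : l → ℝ)
    (ha_lie : ∀ X Y, a ⁅X, Y⁆ = pT nab X Y - pT nab Y X) (f : l → Module.End ℝ (l × ℝ))
    (hf : ∀ (X Z : l) (t : ℝ),
      f X (Z, t) = (nab X Z - a X • Z + t • X, -(pT nab X Z) - a X * t))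
    (X Y Z : l) (t : ℝ) :
    (⁅f X, f Y⁆ - f ⁅X, Y⁆) (Z, t) =
      (weyl nab X Y Z, -(pT nab X (nab Y Z) - pT nab Y (nab X Z) - pT nab ⁅X, Y⁆ Z)) := by
  rw [LieRing.of_associative_ring_bracket, LinearMap.sub_apply, LinearMap.sub_apply,
    Module.End.mul_apply, Module.End.mul_apply, hf Y, hf X Z, hf X, hf Y, hf, ha_lie]
  ext
  · simp only [Prod.fst_sub, weyl, curv, map_sub, map_add, map_smul]
    linear_combination (norm := module) t • tf X Y
  · simp only [Prod.snd_sub, pT_sub_right, pT_add_right, pT_smul_right]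
    ring

/-- With `f : l → End ℝ (l × ℝ)` given by
`f(X)(Z,t) = (∇_X Z − a_X·Z + t·X, −P(X,Z) − a_X·t)`, `a_X = tr(∇_X)/(n+1)`,
`f` is a Lie algebra homomorphism iff the Weyl projective curvature vanishes and
the Codazzi identity holds. -/
theorem p_homomorphism_iff_projectively_flat
    (l : Type*) [LieRing l] [LieAlgebra ℝ l]
    [FiniteDimensional ℝ l] (hn : 2 ≤ Module.finrank ℝ l)
    (nab : l →ₗ[ℝ] l →ₗ[ℝ] l)
    (tf : ∀ X Y : l, nab X Y - nab Y X = ⁅X, Y⁆)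
    (a : l → ℝ)
    (ha : ∀ X, a X = LinearMap.trace ℝ l (nab X) / ((Module.finrank ℝ l : ℝ) + 1))
    (f : l → Module.End ℝ (l × ℝ))
    (hf : ∀ (X Z : l) (t : ℝ),
      f X (Z, t) = (nab X Z - a X • Z + t • X, -(pT nab X Z) - a X * t)) :
    (∀ X Y : l, f ⁅X, Y⁆ = ⁅f X, f Y⁆) ↔
      ((∀ X Y Z : l, weyl nab X Y Z = 0) ∧
       (∀ X Y Z : l, pT nab X (nab Y Z) - pT nab Y (nab X Z) - pT nab ⁅X, Y⁆ Z = 0)) := by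
  have defect := lie_sub_map_lie_apply nab tf a
    (fun X Y => by rw [ha, pT_sub_pT_swap nab hn tf]) f hf
  constructor
  · intro hom
    have defect_zero (X Y Z : l) := defect X Y Z 0
    simp only [← hom, sub_self, LinearMap.zero_apply, Prod.zero_eq_mk, Prod.mk.injEq,
      zero_eq_neg] at defect_zero
    exact ⟨fun X Y Z => (defect_zero X Y Z).1.symm, fun X Y Z => (defect_zero X Y Z).2⟩
  · rintro ⟨flat, codazzi⟩ X Y
    refine (sub_eq_zero.mp (LinearMap.ext fun ⟨Z, t⟩ => ?_)).symm
    rw [defect, flat, codazzi, neg_zero]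
    rfl

end
end

section
/- Let n ≥ 2 and let b denote the set of real upper triangular n×n matrices of trace zero (X_{ij} = 0 for i > j, tr X = 0). For X ∈ b and 0 ≤ k ≤ n−1 let X^{(k)} be the matrix with X^{(k)}_{ij} = X_{ij} if j − i = k and 0 otherwise. Define the bilinear product ∇_X Y := Σ_{i ≥ 0, j ≥ 0, i+j > 0} (j/(i+j))·[X^{(i)}, Y^{(j)}], where [A,B] = AB − BA. Then ∇ maps b × b into b, is torsion-free (∇_X Y − ∇_Y X = [X,Y] for all X, Y ∈ b), and its curvature vanishes identically: R(X,Y)Z := ∇_X(∇_Y Z) − ∇_Y(∇_X Z) − ∇_{[X,Y]}Z = 0 for all X, Y, Z ∈ b. -/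
/-! With `E = diag(0, 1, …, n-1)`, the map `M ↦ ⁅M, E⁆` multiplies the `k`-th superdiagonal by `k`:
it is a derivation of the matrix Lie algebra, invertible on matrices with zero diagonal. Expanding
over superdiagonals gives `∇_X Y = ⁅·, E⁆⁻¹ ⁅X, ⁅Y, E⁆⁆` on `b`. Torsion-freeness is then the
derivation rule `⁅⁅X, Y⁆, E⁆ = ⁅X, ⁅Y, E⁆⁆ - ⁅Y, ⁅X, E⁆⁆`, and since `⁅∇_Y Z, E⁆ = ⁅Y, ⁅Z, E⁆⁆`,
the curvature is `⁅·, E⁆⁻¹` applied to the Jacobi expression in `X`, `Y`, `⁅Z, E⁆`, which vanishes.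
-/

noncomputable section

/-- Membership in `b`: real upper triangular `n×n` matrices of trace zero. -/
def inB {n : ℕ} (X : Matrix (Fin n) (Fin n) ℝ) : Prop :=
  Matrix.trace X = 0 ∧ ∀ i j : Fin n, (j : ℕ) < (i : ℕ) → X i j = 0

/-- The `k`-th superdiagonal component `X^{(k)}` of a matrix `X`. -/
def sd {n : ℕ} (X : Matrix (Fin n) (Fin n) ℝ) (k : ℕ) :
    Matrix (Fin n) (Fin n) ℝ :=
  fun i j => if (j : ℤ) - (i : ℤ) = (k : ℤ) then X i j else 0

/-- The product `∇_X Y := Σ_{i,j ≥ 0, i+j > 0} (j/(i+j))·[X^{(i)}, Y^{(j)}]`. -/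
def nabB (n : ℕ) (X Y : Matrix (Fin n) (Fin n) ℝ) :
    Matrix (Fin n) (Fin n) ℝ :=
  ∑ i ∈ Finset.range n, ∑ j ∈ Finset.range n,
    if 0 < i + j then (((j : ℝ) / ((i : ℝ) + (j : ℝ)))) • ⁅sd X i, sd Y j⁆ else 0

theorem Fin.cast_val_sub_cast_val_ne_zero {R : Type*} [AddGroupWithOne R] [CharZero R] {n : ℕ}
    {a b : Fin n} (hab : a ≠ b) : ((b : ℕ) : R) - (a : ℕ) ≠ 0 :=
  sub_ne_zero.2 (Nat.cast_injective.ne (Fin.val_injective.ne hab.symm))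

section

attribute [local instance] LieRing.ofAssociativeRing

namespace Matrix

variable {n : ℕ}

def gradingMatrix (n : ℕ) : Matrix (Fin n) (Fin n) ℝ := diagonal fun i => (i : ℝ)

theorem lie_gradingMatrix_apply (M : Matrix (Fin n) (Fin n) ℝ) (a b : Fin n) :
    ⁅M, gradingMatrix n⁆ a b = ((b : ℝ) - a) * M a b := by
  simp only [gradingMatrix, Ring.lie_def, sub_apply, mul_diagonal, diagonal_mul]
  ring

/-- Inverse of `⁅·, gradingMatrix n⁆` on matrices with zero diagonal; on the diagonal the
division is by `0`, so the result always has zero diagonal. -/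
def gradingInv : Matrix (Fin n) (Fin n) ℝ →ₗ[ℝ] Matrix (Fin n) (Fin n) ℝ where
  toFun M := of fun a b => M a b / ((b : ℝ) - a)
  map_add' M N := by ext; simp [add_div]
  map_smul' c M := by ext; simp [mul_div_assoc]

theorem gradingInv_apply (M : Matrix (Fin n) (Fin n) ℝ) (a b : Fin n) :
    gradingInv M a b = M a b / ((b : ℝ) - a) := rfl

theorem diag_gradingInv (M : Matrix (Fin n) (Fin n) ℝ) : (gradingInv M).diag = 0 := by
  ext a; simp [gradingInv_apply]

theorem lie_gradingInv_gradingMatrix {M : Matrix (Fin n) (Fin n) ℝ} (hM : M.diag = 0) :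
    ⁅gradingInv M, gradingMatrix n⁆ = M := by
  ext a b
  rw [lie_gradingMatrix_apply, gradingInv_apply]
  rcases eq_or_ne a b with rfl | hab
  · simpa using (congrFun hM a).symm
  · field_simp [Fin.cast_val_sub_cast_val_ne_zero hab]

theorem gradingInv_lie_gradingMatrix {M : Matrix (Fin n) (Fin n) ℝ} (hM : M.diag = 0) :
    gradingInv ⁅M, gradingMatrix n⁆ = M := by
  ext a b
  rw [gradingInv_apply, lie_gradingMatrix_apply]
  rcases eq_or_ne a b with rfl | hab
  · simpa using (congrFun hM a).symm
  · field_simp [Fin.cast_val_sub_cast_val_ne_zero hab]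

def IsSuperdiagonal {R : Type*} [Zero R] (k : ℕ) (M : Matrix (Fin n) (Fin n) R) : Prop :=
  ∀ a b : Fin n, (b : ℤ) - a ≠ k → M a b = 0

theorem isSuperdiagonal_sd (M : Matrix (Fin n) (Fin n) ℝ) (k : ℕ) :
    IsSuperdiagonal k (sd M k) :=
  fun _ _ h => if_neg h

namespace IsSuperdiagonal

variable {R : Type*} {k l : ℕ}

theorem mul [NonUnitalNonAssocSemiring R] {A B : Matrix (Fin n) (Fin n) R}
    (hA : IsSuperdiagonal k A) (hB : IsSuperdiagonal l B) : IsSuperdiagonal (k + l) (A * B) := by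
  intro a b hab
  rw [mul_apply]
  refine Finset.sum_eq_zero fun c _ => ?_
  by_cases hac : (c : ℤ) - a = k
  · rw [hB c b (by omega), mul_zero]
  · rw [hA a c hac, zero_mul]

theorem lie [NonUnitalNonAssocRing R] {A B : Matrix (Fin n) (Fin n) R}
    (hA : IsSuperdiagonal k A) (hB : IsSuperdiagonal l B) : IsSuperdiagonal (k + l) ⁅A, B⁆ := by
  have hBA : IsSuperdiagonal (k + l) (B * A) := add_comm l k ▸ hB.mul hA
  intro a b hab
  rw [Ring.lie_def, sub_apply, hA.mul hB a b hab, hBA a b hab, sub_zero]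

theorem lie_gradingMatrix {M : Matrix (Fin n) (Fin n) ℝ} (hM : IsSuperdiagonal k M) :
    ⁅M, gradingMatrix n⁆ = (k : ℝ) • M := by
  ext a b
  rw [lie_gradingMatrix_apply, smul_apply, smul_eq_mul]
  by_cases hab : (b : ℤ) - a = k
  · congr 1; exact_mod_cast hab
  · simp [hM a b hab]

theorem gradingInv {M : Matrix (Fin n) (Fin n) ℝ} (hM : IsSuperdiagonal k M) :
    gradingInv M = (k : ℝ)⁻¹ • M := by
  ext a b
  rw [gradingInv_apply, smul_apply, smul_eq_mul, div_eq_inv_mul]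
  by_cases hab : (b : ℤ) - a = k
  · congr 2; exact_mod_cast hab
  · simp [hM a b hab]

end IsSuperdiagonal

theorem IsUpperTriangular.sum_sd {M : Matrix (Fin n) (Fin n) ℝ} (hM : M.IsUpperTriangular) :
    ∑ k ∈ Finset.range n, sd M k = M := by
  ext a b
  rw [sum_apply]
  rcases lt_or_ge (b : ℕ) a with hba | hab
  · rw [hM hba]
    exact Finset.sum_eq_zero fun k _ => if_neg (by omega)
  · have hk : (b : ℕ) - a ∈ Finset.range n := Finset.mem_range.2 (by omega)
    exact (Finset.sum_eq_single_of_mem _ hk fun k _ hk => if_neg (by omega)).trans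
      (if_pos (by omega))

namespace IsUpperTriangular

variable {R : Type*} {A B : Matrix (Fin n) (Fin n) R}

theorem lie [Ring R] (hA : A.IsUpperTriangular) (hB : B.IsUpperTriangular) :
    ⁅A, B⁆.IsUpperTriangular :=
  Ring.lie_def A B ▸ (hA.mul hB).sub (hB.mul hA)

theorem mul_apply_self [NonUnitalNonAssocSemiring R] (hA : A.IsUpperTriangular)
    (hB : B.IsUpperTriangular) (a : Fin n) :
    (A * B) a a = A a a * B a a := by
  rw [mul_apply]
  refine Fintype.sum_eq_single a fun c hc => ?_
  rcases hc.lt_or_gt with hca | hac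
  · rw [hA hca, zero_mul]
  · rw [hB hac, mul_zero]

theorem diag_lie [CommRing R] (hA : A.IsUpperTriangular) (hB : B.IsUpperTriangular) :
    ⁅A, B⁆.diag = 0 := by
  ext a
  rw [diag_apply, Pi.zero_apply, Ring.lie_def, sub_apply, hA.mul_apply_self hB,
    hB.mul_apply_self hA, mul_comm, sub_self]

end IsUpperTriangular

theorem IsUpperTriangular.gradingInv {M : Matrix (Fin n) (Fin n) ℝ} (hM : M.IsUpperTriangular) :
    (gradingInv M).IsUpperTriangular := fun a b hba => by
  rw [gradingInv_apply, hM hba, zero_div]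

theorem IsUpperTriangular.lie_gradingMatrix {M : Matrix (Fin n) (Fin n) ℝ}
    (hM : M.IsUpperTriangular) : ⁅M, gradingMatrix n⁆.IsUpperTriangular :=
  hM.lie (blockTriangular_diagonal _)

end Matrix

open Matrix

variable {n : ℕ} {X Y Z : Matrix (Fin n) (Fin n) ℝ}

theorem inB.isUpperTriangular (hX : inB X) : X.IsUpperTriangular :=
  fun i j => hX.2 i j

theorem nabB_eq_gradingInv (hX : X.IsUpperTriangular) (hY : Y.IsUpperTriangular) :
    nabB n X Y = gradingInv ⁅X, ⁅Y, gradingMatrix n⁆⁆ := by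
  have hgrade : ⁅Y, gradingMatrix n⁆ = ∑ j ∈ Finset.range n, (j : ℝ) • sd Y j := by
    conv_lhs => rw [← hY.sum_sd]
    rw [sum_lie]
    exact Finset.sum_congr rfl fun j _ => (isSuperdiagonal_sd Y j).lie_gradingMatrix
  conv_rhs => rw [hgrade, ← hX.sum_sd, sum_lie_sum]
  simp only [map_sum, lie_smul, map_smul]
  refine Finset.sum_congr rfl fun i _ => Finset.sum_congr rfl fun j _ => ?_
  rw [((isSuperdiagonal_sd X i).lie (isSuperdiagonal_sd Y j)).gradingInv, smul_smul]
  split_ifs with hij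
  · push_cast; rw [div_eq_mul_inv]
  · obtain rfl : j = 0 := by omega
    simp

theorem isUpperTriangular_nabB (hX : X.IsUpperTriangular) (hY : Y.IsUpperTriangular) :
    (nabB n X Y).IsUpperTriangular :=
  nabB_eq_gradingInv hX hY ▸ (hX.lie hY.lie_gradingMatrix).gradingInv

theorem lie_nabB_gradingMatrix (hY : Y.IsUpperTriangular) (hZ : Z.IsUpperTriangular) :
    ⁅nabB n Y Z, gradingMatrix n⁆ = ⁅Y, ⁅Z, gradingMatrix n⁆⁆ := by
  rw [nabB_eq_gradingInv hY hZ, lie_gradingInv_gradingMatrix (hY.diag_lie hZ.lie_gradingMatrix)]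

theorem inB_nabB (hX : X.IsUpperTriangular) (hY : Y.IsUpperTriangular) : inB (nabB n X Y) := by
  refine ⟨?_, fun i j hij => isUpperTriangular_nabB hX hY hij⟩
  rw [trace, nabB_eq_gradingInv hX hY, diag_gradingInv, Pi.zero_def, Finset.sum_const_zero]

theorem nabB_sub_nabB (hX : X.IsUpperTriangular) (hY : Y.IsUpperTriangular) :
    nabB n X Y - nabB n Y X = ⁅X, Y⁆ := by
  rw [nabB_eq_gradingInv hX hY, nabB_eq_gradingInv hY hX, ← map_sub, ← lie_lie,
    gradingInv_lie_gradingMatrix (hX.diag_lie hY)]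

theorem nabB_curvature_eq_zero (hX : X.IsUpperTriangular) (hY : Y.IsUpperTriangular)
    (hZ : Z.IsUpperTriangular) :
    nabB n X (nabB n Y Z) - nabB n Y (nabB n X Z) - nabB n ⁅X, Y⁆ Z = 0 := by
  rw [nabB_eq_gradingInv hX (isUpperTriangular_nabB hY hZ),
    nabB_eq_gradingInv hY (isUpperTriangular_nabB hX hZ), nabB_eq_gradingInv (hX.lie hY) hZ,
    lie_nabB_gradingMatrix hY hZ, lie_nabB_gradingMatrix hX hZ, ← map_sub, ← map_sub, ← lie_lie,
    sub_self, map_zero]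

end

theorem borel_flat_connection_general (n : ℕ) :
    (∀ X Y : Matrix (Fin n) (Fin n) ℝ, inB X → inB Y → inB (nabB n X Y)) ∧
    (∀ X Y : Matrix (Fin n) (Fin n) ℝ, inB X → inB Y →
      nabB n X Y - nabB n Y X = ⁅X, Y⁆) ∧
    (∀ X Y Z : Matrix (Fin n) (Fin n) ℝ, inB X → inB Y → inB Z →
      nabB n X (nabB n Y Z) - nabB n Y (nabB n X Z) - nabB n ⁅X, Y⁆ Z = 0) :=
  ⟨fun _ _ hX hY => inB_nabB hX.isUpperTriangular hY.isUpperTriangular,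
    fun _ _ hX hY => nabB_sub_nabB hX.isUpperTriangular hY.isUpperTriangular,
    fun _ _ _ hX hY hZ =>
      nabB_curvature_eq_zero hX.isUpperTriangular hY.isUpperTriangular hZ.isUpperTriangular⟩

/-- On the solvable Lie algebra `b` of upper triangular trace-zero
matrices, the product `∇_X Y = Σ (j/(i+j))·[X^{(i)}, Y^{(j)}]` maps `b × b` into `b`,
is torsion-free, and has identically vanishing curvature. -/
theorem borel_flat_connection (n : ℕ) (hn : 2 ≤ n) :
    (∀ X Y : Matrix (Fin n) (Fin n) ℝ, inB X → inB Y → inB (nabB n X Y)) ∧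
    (∀ X Y : Matrix (Fin n) (Fin n) ℝ, inB X → inB Y →
      nabB n X Y - nabB n Y X = ⁅X, Y⁆) ∧
    (∀ X Y Z : Matrix (Fin n) (Fin n) ℝ, inB X → inB Y → inB Z →
      nabB n X (nabB n Y Z) - nabB n Y (nabB n X Z) - nabB n ⁅X, Y⁆ Z = 0) :=
  borel_flat_connection_general n

end
end

section
/- Let n ≥ 2, let b be the real upper triangular trace-zero n×n matrices with the flat product ∇_X Y := Σ_{i ≥ 0, j ≥ 0, i+j > 0} (j/(i+j))·[X^{(i)}, Y^{(j)}]. Fix a subset Λ' ⊆ {1,…,n−1} and define b(i) := #{k : 1 ≤ k < i, k ∉ Λ'} for 1 ≤ i ≤ n. Let a_{Λ'} be the real span of the matrices H^i for i ∈ {1,…,n−1} with i ∉ Λ', and let n_{Λ'} := {X : tr X = 0 and X_{ij} = 0 unless b(i) < b(j)}. Then the subspace s_{Λ'} := a_{Λ'} + n_{Λ'} of b is autoparallel: ∇_X Y ∈ s_{Λ'} for all X, Y ∈ s_{Λ'}. -/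
/-!
Every term of `∇_X Y` is a multiple of `[X^{(i)}, Y^{(j)}]` with `j > 0` (the coefficient
vanishes for `j = 0`). Since `a_{Λ'}` is diagonal, for `X, Y ∈ s_{Λ'}` the component `X^{(i)}`
is block upper triangular and `Y^{(j)}`, `j > 0`, is strictly block upper triangular. The
strictly block upper triangular matrices form an ideal in the block upper triangular ones, and
commutators are traceless, so `∇_X Y` already lies in `n_{Λ'}`.
-/

noncomputable section

/-- The block function `b(i) = #{k : 1 ≤ k < i, k ∉ Λ'}` (here `i : Fin n` is the
0-based index corresponding to the 1-based row index `i+1`). -/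
def blk (Λ : Finset ℕ) {n : ℕ} (i : Fin n) : ℕ :=
  ((Finset.Icc 1 (i : ℕ)).filter (fun k => k ∉ Λ)).card

/-- The diagonal matrix `H^i` whose first `i` diagonal entries are `(n−i)/n` and whose
last `n−i` entries are `−i/n`. -/
def Hmat (n i : ℕ) : Matrix (Fin n) (Fin n) ℝ :=
  Matrix.diagonal (fun t : Fin n =>
    if (t : ℕ) < i then ((n : ℝ) - (i : ℝ)) / (n : ℝ) else -(i : ℝ) / (n : ℝ))

/-- Membership in `a_{Λ'}`: the real span of the `H^i` with `i ∈ {1,…,n−1}`, `i ∉ Λ'`. -/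
def inA (n : ℕ) (Λ : Finset ℕ) (X : Matrix (Fin n) (Fin n) ℝ) : Prop :=
  X ∈ Submodule.span ℝ
    {M : Matrix (Fin n) (Fin n) ℝ |
      ∃ i ∈ Finset.Icc 1 (n - 1), i ∉ Λ ∧ M = Hmat n i}

/-- Membership in `n_{Λ'}`: trace-zero matrices with `X_{ij} = 0` unless `b(i) < b(j)`. -/
def inN (n : ℕ) (Λ : Finset ℕ) (X : Matrix (Fin n) (Fin n) ℝ) : Prop :=
  Matrix.trace X = 0 ∧ ∀ i j : Fin n, ¬ blk Λ i < blk Λ j → X i j = 0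

/-- Membership in `s_{Λ'} = a_{Λ'} + n_{Λ'}`. -/
def inS (n : ℕ) (Λ : Finset ℕ) (X : Matrix (Fin n) (Fin n) ℝ) : Prop :=
  ∃ A N : Matrix (Fin n) (Fin n) ℝ, inA n Λ A ∧ inN n Λ N ∧ X = A + N

section BlockTriangular

variable {ι α R : Type*} [Fintype ι] [Preorder α] [Ring R] (b : ι → α)
  {P Q : Matrix ι ι R}

theorem Matrix.mul_apply_eq_zero_of_le_of_lt (hP : ∀ p q, ¬ b p ≤ b q → P p q = 0)
    (hQ : ∀ p q, ¬ b p < b q → Q p q = 0) {p q : ι} (hpq : ¬ b p < b q) :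
    (P * Q) p q = 0 := by
  rw [Matrix.mul_apply]
  refine Finset.sum_eq_zero fun r _ => ?_
  by_cases hpr : b p ≤ b r
  · rw [hQ r q fun hrq => hpq (hpr.trans_lt hrq), mul_zero]
  · rw [hP p r hpr, zero_mul]

theorem Matrix.mul_apply_eq_zero_of_lt_of_le (hP : ∀ p q, ¬ b p ≤ b q → P p q = 0)
    (hQ : ∀ p q, ¬ b p < b q → Q p q = 0) {p q : ι} (hpq : ¬ b p < b q) :
    (Q * P) p q = 0 := by
  rw [Matrix.mul_apply]
  refine Finset.sum_eq_zero fun r _ => ?_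
  by_cases hrq : b r ≤ b q
  · rw [hQ p r fun hpr => hpq (hpr.trans_le hrq), zero_mul]
  · rw [hP r q hrq, mul_zero]

theorem Matrix.lie_apply_eq_zero_of_le_of_lt (hP : ∀ p q, ¬ b p ≤ b q → P p q = 0)
    (hQ : ∀ p q, ¬ b p < b q → Q p q = 0) {p q : ι} (hpq : ¬ b p < b q) :
    ⁅P, Q⁆ p q = 0 := by
  rw [Ring.lie_def, Matrix.sub_apply, Matrix.mul_apply_eq_zero_of_le_of_lt b hP hQ hpq,
    Matrix.mul_apply_eq_zero_of_lt_of_le b hP hQ hpq, sub_zero]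

end BlockTriangular

theorem inA_apply_of_ne {n : ℕ} {Λ : Finset ℕ} {A : Matrix (Fin n) (Fin n) ℝ}
    (hA : inA n Λ A) {p q : Fin n} (hpq : p ≠ q) : A p q = 0 := by
  induction hA using Submodule.span_induction with
  | mem M hM =>
    obtain ⟨i, -, -, rfl⟩ := hM
    exact Matrix.diagonal_apply_ne _ hpq
  | zero => rfl
  | add X Y _ _ hX hY => rw [Matrix.add_apply, hX, hY, add_zero]
  | smul c X _ hX => rw [Matrix.smul_apply, hX, smul_zero]

theorem sd_apply_eq_zero_of_ne_add {n : ℕ} (X : Matrix (Fin n) (Fin n) ℝ) {k : ℕ}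
    {p q : Fin n} (h : (q : ℕ) ≠ p + k) : sd X k p q = 0 :=
  if_neg (by omega)

theorem sd_apply_eq_zero_of_inS {n : ℕ} {Λ : Finset ℕ} {X : Matrix (Fin n) (Fin n) ℝ}
    (hX : inS n Λ X) {k : ℕ} (hk : 0 < k) {p q : Fin n} (hpq : ¬ blk Λ p < blk Λ q) :
    sd X k p q = 0 := by
  obtain ⟨A, N, hA, hN, rfl⟩ := hX
  by_cases hq : (q : ℕ) = p + k
  · have hne : p ≠ q := fun h => by rw [h] at hq; omega
    rw [sd, if_pos (by omega), Matrix.add_apply, inA_apply_of_ne hA hne, hN.2 p q hpq,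
      add_zero]
  · exact sd_apply_eq_zero_of_ne_add _ hq

theorem sd_apply_eq_zero_of_inS_of_not_le {n : ℕ} {Λ : Finset ℕ}
    {X : Matrix (Fin n) (Fin n) ℝ} (hX : inS n Λ X) (k : ℕ) {p q : Fin n}
    (hpq : ¬ blk Λ p ≤ blk Λ q) : sd X k p q = 0 := by
  rcases Nat.eq_zero_or_pos k with rfl | hk
  · refine sd_apply_eq_zero_of_ne_add X fun h => hpq ?_
    rw [show q = p from Fin.ext (by omega)]
  · exact sd_apply_eq_zero_of_inS hX hk (mt le_of_lt hpq)

theorem trace_nabB (n : ℕ) (X Y : Matrix (Fin n) (Fin n) ℝ) : (nabB n X Y).trace = 0 := by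
  simp only [nabB, Matrix.trace_sum]
  refine Finset.sum_eq_zero fun i _ => Finset.sum_eq_zero fun j _ => ?_
  split_ifs
  · rw [Matrix.trace_smul, LieAlgebra.matrix_trace_commutator_zero, smul_zero]
  · exact Matrix.trace_zero _ _

theorem nabB_apply_eq_zero_of_inS {n : ℕ} {Λ : Finset ℕ} {X Y : Matrix (Fin n) (Fin n) ℝ}
    (hX : inS n Λ X) (hY : inS n Λ Y) {p q : Fin n} (hpq : ¬ blk Λ p < blk Λ q) :
    nabB n X Y p q = 0 := by
  simp only [nabB, Matrix.sum_apply]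
  refine Finset.sum_eq_zero fun i _ => Finset.sum_eq_zero fun j _ => ?_
  rcases Nat.eq_zero_or_pos j with rfl | hj
  · simp
  · split_ifs
    · rw [Matrix.smul_apply, Matrix.lie_apply_eq_zero_of_le_of_lt (blk Λ)
        (fun _ _ => sd_apply_eq_zero_of_inS_of_not_le hX i)
        (fun _ _ => sd_apply_eq_zero_of_inS hY hj) hpq, smul_zero]
    · rfl

theorem inN_nabB {n : ℕ} {Λ : Finset ℕ} {X Y : Matrix (Fin n) (Fin n) ℝ}
    (hX : inS n Λ X) (hY : inS n Λ Y) : inN n Λ (nabB n X Y) :=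
  ⟨trace_nabB n X Y, fun _ _ => nabB_apply_eq_zero_of_inS hX hY⟩

theorem inS_of_inN {n : ℕ} {Λ : Finset ℕ} {N : Matrix (Fin n) (Fin n) ℝ} (hN : inN n Λ N) :
    inS n Λ N :=
  ⟨0, N, Submodule.zero_mem _, hN, (zero_add N).symm⟩

theorem solvable_autoparallel_in_borel_general (n : ℕ)
    (Λ : Finset ℕ) :
    ∀ X Y : Matrix (Fin n) (Fin n) ℝ, inS n Λ X → inS n Λ Y →
      inS n Λ (nabB n X Y) :=
  fun _ _ hX hY => inS_of_inN (inN_nabB hX hY)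

/-- The subspace `s_{Λ'} = a_{Λ'} + n_{Λ'}` of `b` is autoparallel for the
flat product `∇` on the upper triangular trace-zero matrices. -/
theorem solvable_autoparallel_in_borel (n : ℕ) (hn : 2 ≤ n)
    (Λ : Finset ℕ) (hΛ : Λ ⊆ Finset.Icc 1 (n - 1)) :
    ∀ X Y : Matrix (Fin n) (Fin n) ℝ, inS n Λ X → inS n Λ Y →
      inS n Λ (nabB n X Y) :=
  solvable_autoparallel_in_borel_general n Λ

end
end

section
/- Let n ≥ 2 and let Λ' be a proper subset of {1,…,n−1}. Define b(i) := #{k : 1 ≤ k < i, k ∉ Λ'} for 1 ≤ i ≤ n, and let q_{Λ'} := {X ∈ M_n(ℝ) : tr X = 0 and X_{ij} = 0 whenever b(i) > b(j)}. Then q_{Λ'} is autoparallel for the product ∇_X Y := XY − (tr(XY)/n)·I_n on sl(n,ℝ): for all X, Y ∈ q_{Λ'} one has XY − (tr(XY)/n)·I_n ∈ q_{Λ'}. -/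
/-! The trace-zero condition is preserved because `A ↦ A - (tr A / n) • 1` is the projection
onto `sl(n)`, and the block condition because block upper triangular matrices (for any block
function) form a subalgebra containing the scalars. -/

noncomputable section

/-- Membership in the parabolic subalgebra `q_{Λ'}` of `sl(n,ℝ)`: trace-zero matrices
with `X_{ij} = 0` whenever `b(i) > b(j)`. -/
def inQ (n : ℕ) (Λ : Finset ℕ) (X : Matrix (Fin n) (Fin n) ℝ) : Prop :=
  Matrix.trace X = 0 ∧ ∀ i j : Fin n, blk Λ j < blk Λ i → X i j = 0

namespace Matrix

theorem trace_sub_smul_one_trace_div_card {ι K : Type*} [Fintype ι] [DecidableEq ι] [Field K]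
    [CharZero K] (A : Matrix ι ι K) :
    trace (A - (trace A / (Fintype.card ι : K)) • (1 : Matrix ι ι K)) = 0 := by
  rcases isEmpty_or_nonempty ι with hι | hι
  · simp [trace]
  · have hcard : (Fintype.card ι : K) ≠ 0 := Nat.cast_ne_zero.mpr Fintype.card_ne_zero
    rw [trace_sub, trace_smul, trace_one, smul_eq_mul, div_mul_cancel₀ _ hcard, sub_self]

theorem BlockTriangular.sub_smul_one {ι α K : Type*} [DecidableEq ι] [Preorder α]
    [Ring K] {A : Matrix ι ι K} {b : ι → α} (hA : A.BlockTriangular b) (c : K) :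
    (A - c • (1 : Matrix ι ι K)).BlockTriangular b := by
  rw [smul_one_eq_diagonal]
  exact hA.sub (blockTriangular_diagonal _)

end Matrix

theorem parabolic_autoparallel_sl_real_general (n : ℕ)
    (Λ : Finset ℕ) :
    ∀ X Y : Matrix (Fin n) (Fin n) ℝ, inQ n Λ X → inQ n Λ Y →
      inQ n Λ (X * Y - (Matrix.trace (X * Y) / (n : ℝ)) • (1 : Matrix (Fin n) (Fin n) ℝ)) := by
  intro X Y hX hY
  have hXY : (X * Y).BlockTriangular (blk Λ) := Matrix.BlockTriangular.mul hX.2 hY.2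
  refine ⟨?_, fun i j h => hXY.sub_smul_one _ h⟩
  simpa using Matrix.trace_sub_smul_one_trace_div_card (X * Y)

/-- For `n ≥ 2` and a proper subset `Λ'` of `{1,…,n−1}`, the parabolic
subalgebra `q_{Λ'}` is autoparallel for the product `∇_X Y = XY − (tr(XY)/n)·I_n`
on `sl(n,ℝ)`. -/
theorem parabolic_autoparallel_sl_real (n : ℕ) (hn : 2 ≤ n)
    (Λ : Finset ℕ) (hΛ : Λ ⊆ Finset.Icc 1 (n - 1)) (hΛne : Λ ≠ Finset.Icc 1 (n - 1)) :
    ∀ X Y : Matrix (Fin n) (Fin n) ℝ, inQ n Λ X → inQ n Λ Y →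
      inQ n Λ (X * Y - (Matrix.trace (X * Y) / (n : ℝ)) • (1 : Matrix (Fin n) (Fin n) ℝ)) :=
  parabolic_autoparallel_sl_real_general n Λ
end
end

section
/- Let n ≥ 2 and let Λ' be a proper subset of {1,…,n−1}. Define b(i) := #{k : 1 ≤ k < i, k ∉ Λ'} for 1 ≤ i ≤ n, and let q_{Λ'} := {X ∈ M_n(ℍ) : Re(tr X) = 0 and X_{ij} = 0 whenever b(i) > b(j)}, where ℍ is the real quaternion algebra. Then q_{Λ'} is autoparallel for the product ∇_X Y := XY − (Re(tr(XY))/n)·I_n on sl(n,ℍ): for all X, Y ∈ q_{Λ'} one has XY − (Re(tr(XY))/n)·I_n ∈ q_{Λ'}. -/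
noncomputable section

/-- Membership in the parabolic subalgebra `q_{Λ'}` of `sl(n,ℍ)`: quaternionic
matrices with `Re(tr X) = 0` and `X_{ij} = 0` whenever `b(i) > b(j)`. -/
def inQH (n : ℕ) (Λ : Finset ℕ) (X : Matrix (Fin n) (Fin n) (Quaternion ℝ)) : Prop :=
  (Matrix.trace X).re = 0 ∧ ∀ i j : Fin n, blk Λ j < blk Λ i → X i j = 0

open Matrix

theorem Matrix.BlockTriangular.smul {m α R S : Type*} [LT α] [Zero R] [SMulZeroClass S R]
    {M : Matrix m m R} {b : m → α} (hM : M.BlockTriangular b) (c : S) :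
    (c • M).BlockTriangular b :=
  fun _ _ h => by rw [smul_apply, hM h, smul_zero]

theorem Quaternion.re_trace_sub_re_trace_div_card_smul_one {ι R : Type*} [Fintype ι]
    [DecidableEq ι] [Field R] [CharZero R] (A : Matrix ι ι (Quaternion R)) :
    (trace (A - ((trace A).re / Fintype.card ι) • (1 : Matrix ι ι (Quaternion R)))).re = 0 := by
  rcases isEmpty_or_nonempty ι with hι | hι
  · simp
  · have hcard : (Fintype.card ι : R) ≠ 0 := Nat.cast_ne_zero.mpr Fintype.card_ne_zero
    rw [trace_sub, trace_smul, trace_one, Quaternion.re_sub, Quaternion.re_smul,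
      Quaternion.re_natCast, smul_eq_mul, div_mul_cancel₀ _ hcard, sub_self]

theorem inQH_iff {n : ℕ} {Λ : Finset ℕ} {X : Matrix (Fin n) (Fin n) (Quaternion ℝ)} :
    inQH n Λ X ↔ (trace X).re = 0 ∧ X.BlockTriangular (blk Λ) :=
  Iff.rfl

theorem parabolic_autoparallel_sl_quaternion_general (n : ℕ) (Λ : Finset ℕ) :
    ∀ X Y : Matrix (Fin n) (Fin n) (Quaternion ℝ), inQH n Λ X → inQH n Λ Y →
      inQH n Λ (X * Y - (((Matrix.trace (X * Y)).re / (n : ℝ)))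
        • (1 : Matrix (Fin n) (Fin n) (Quaternion ℝ))) := by
  intro X Y hX hY
  rw [inQH_iff] at hX hY ⊢
  refine ⟨?_, (hX.2.mul hY.2).sub (blockTriangular_one.smul _)⟩
  simpa only [Fintype.card_fin] using Quaternion.re_trace_sub_re_trace_div_card_smul_one (X * Y)

/-- For `n ≥ 2` and a proper subset `Λ'` of `{1,…,n−1}`, the parabolic
subalgebra `q_{Λ'}` of `sl(n,ℍ)` is autoparallel for the product
`∇_X Y = XY − (Re(tr(XY))/n)·I_n`. -/
theorem parabolic_autoparallel_sl_quaternion (n : ℕ) (hn : 2 ≤ n)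
    (Λ : Finset ℕ) (hΛ : Λ ⊆ Finset.Icc 1 (n - 1)) (hΛne : Λ ≠ Finset.Icc 1 (n - 1)) :
    ∀ X Y : Matrix (Fin n) (Fin n) (Quaternion ℝ), inQH n Λ X → inQH n Λ Y →
      inQH n Λ (X * Y - (((Matrix.trace (X * Y)).re / (n : ℝ)))
        • (1 : Matrix (Fin n) (Fin n) (Quaternion ℝ))) :=
  parabolic_autoparallel_sl_quaternion_general n Λ

end
end

section
/- Let n ≥ 2 and Λ' a proper subset of {1,…,n−1}, and let q_{Λ'} ⊆ sl(n,ℝ) be the associated parabolic subalgebra of block upper triangular trace-zero matrices. Then the product ∇_X Y := XY − (tr(XY)/n)·I_n restricted to q_{Λ'} is not flat: there exist X, Y, Z ∈ q_{Λ'} with R(X,Y)Z := ∇_X(∇_Y Z) − ∇_Y(∇_X Z) − ∇_{[X,Y]}Z ≠ 0. (For instance X = E_{12}, Y = Z = H^1 give R(X,Y)Z = −((n−1)/n²)·E_{12}.) -/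
/-!
Take `X = E₁₂` and `Y = Z = H¹`. Left and right multiplication by `H¹` act on `E₁₂` by the
scalars `1 − 1/n` and `−1/n`, and `H¹` satisfies a quadratic equation, so every term of
`R(E₁₂, H¹)H¹` is a multiple of `E₁₂`; the coefficients add up to `−(1/n)(1 − 1/n) ≠ 0`.
-/

noncomputable section

/-- The product `∇_X Y = XY − (tr(XY)/n)·I_n` on `sl(n,ℝ)`. -/
def nabSL (n : ℕ) (X Y : Matrix (Fin n) (Fin n) ℝ) : Matrix (Fin n) (Fin n) ℝ :=
  X * Y - (Matrix.trace (X * Y) / (n : ℝ)) • (1 : Matrix (Fin n) (Fin n) ℝ)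

def curvSL (n : ℕ) (X Y Z : Matrix (Fin n) (Fin n) ℝ) : Matrix (Fin n) (Fin n) ℝ :=
  nabSL n X (nabSL n Y Z) - nabSL n Y (nabSL n X Z) - nabSL n ⁅X, Y⁆ Z

/-- For `i = 0` this is the matrix `H¹` of the paper. -/
def cartanH (n : ℕ) (i : Fin n) : Matrix (Fin n) (Fin n) ℝ :=
  Matrix.single i i 1 - (n : ℝ)⁻¹ • 1

section Product

variable {n : ℕ}

lemma nabSL_smul_right (a : ℝ) (X Y : Matrix (Fin n) (Fin n) ℝ) :
    nabSL n X (a • Y) = a • nabSL n X Y := by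
  unfold nabSL
  rw [Matrix.mul_smul, Matrix.trace_smul, smul_sub, smul_smul, smul_eq_mul, mul_div_assoc]

lemma nabSL_smul_left (a : ℝ) (X Y : Matrix (Fin n) (Fin n) ℝ) :
    nabSL n (a • X) Y = a • nabSL n X Y := by
  unfold nabSL
  rw [Matrix.smul_mul, Matrix.trace_smul, smul_sub, smul_smul, smul_eq_mul, mul_div_assoc]

lemma nabSL_of_mul_eq_smul {X Y Z : Matrix (Fin n) (Fin n) ℝ} {a : ℝ} (hZ : Z.trace = 0)
    (h : X * Y = a • Z) : nabSL n X Y = a • Z := by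
  simp [nabSL, h, hZ]

lemma nabSL_self_of_mul_self_eq {H : Matrix (Fin n) (Fin n) ℝ} {p q : ℝ} (hn : (n : ℝ) ≠ 0)
    (hH : H.trace = 0) (h : H * H = p • H + q • 1) : nabSL n H H = p • H := by
  have htr : (H * H).trace / n = q := by
    rw [h, Matrix.trace_add, Matrix.trace_smul, Matrix.trace_smul, hH, Matrix.trace_one,
      Fintype.card_fin, smul_zero, zero_add, smul_eq_mul, mul_div_cancel_right₀ _ hn]
  rw [nabSL, htr, h, add_sub_cancel_right]

lemma curvSL_eq_smul {E H : Matrix (Fin n) (Fin n) ℝ} {a b p q : ℝ} (hn : (n : ℝ) ≠ 0)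
    (hE : E.trace = 0) (hH : H.trace = 0) (hEH : E * H = a • E) (hHE : H * E = b • E)
    (hHH : H * H = p • H + q • 1) : curvSL n E H H = (a * (p - a)) • E := by
  have hbr : ⁅E, H⁆ = (a - b) • E := by
    rw [Ring.lie_def, hEH, hHE, sub_smul]
  rw [curvSL, nabSL_self_of_mul_self_eq hn hH hHH, nabSL_of_mul_eq_smul hE hEH, hbr,
    nabSL_smul_right, nabSL_smul_right, nabSL_smul_left, nabSL_of_mul_eq_smul hE hEH,
    nabSL_of_mul_eq_smul hE hHE, smul_smul, smul_smul, smul_smul, ← sub_smul, ← sub_smul]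
  ring_nf

end Product

section Cartan

variable {n : ℕ} {i j : Fin n}

lemma single_mul_cartanH (hij : i ≠ j) :
    Matrix.single i j 1 * cartanH n i = (-(n : ℝ)⁻¹) • Matrix.single i j (1 : ℝ) := by
  rw [cartanH, Matrix.mul_sub, Matrix.single_mul_single_of_ne (h := hij.symm), Matrix.mul_smul,
    Matrix.mul_one, zero_sub, neg_smul]

lemma cartanH_mul_single :
    cartanH n i * Matrix.single i j 1 = (1 - (n : ℝ)⁻¹) • Matrix.single i j (1 : ℝ) := by
  rw [cartanH, Matrix.sub_mul, Matrix.single_mul_single_same, Matrix.smul_mul, Matrix.one_mul,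
    mul_one, sub_smul, one_smul]

lemma cartanH_mul_self :
    cartanH n i * cartanH n i =
      (1 - 2 * (n : ℝ)⁻¹) • cartanH n i + ((n : ℝ)⁻¹ - (n : ℝ)⁻¹ ^ 2) • 1 := by
  simp only [cartanH, Matrix.sub_mul, Matrix.mul_sub, Matrix.single_mul_single_same, mul_one,
    Matrix.smul_mul, Matrix.mul_smul, Matrix.one_mul]
  module

lemma trace_cartanH (hn : (n : ℝ) ≠ 0) : (cartanH n i).trace = 0 := by
  simp [cartanH, Matrix.trace_one, hn]

lemma cartanH_apply_of_ne {k l : Fin n} (hkl : k ≠ l) : cartanH n i k l = 0 := by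
  simp [cartanH, Matrix.one_apply_ne hkl,
    Matrix.single_apply_of_ne (h := fun h : i = k ∧ i = l => hkl (h.1.symm.trans h.2))]

end Cartan

section Parabolic

variable {n : ℕ} {Λ : Finset ℕ}

lemma blk_eq_zero_of_val_eq_zero {i : Fin n} (hi : (i : ℕ) = 0) : blk Λ i = 0 := by
  simp [blk, hi]

lemma inQ_of_apply_of_ne_eq_zero {X : Matrix (Fin n) (Fin n) ℝ} (htr : X.trace = 0)
    (hX : ∀ k l, k ≠ l → X k l = 0) : inQ n Λ X :=
  ⟨htr, fun k l hkl => hX k l (by rintro rfl; exact lt_irrefl _ hkl)⟩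

lemma inQ_single_of_blk_eq_zero {i j : Fin n} (hi : blk Λ i = 0) (hij : i ≠ j) (c : ℝ) :
    inQ n Λ (Matrix.single i j c) := by
  refine ⟨Matrix.trace_single_eq_of_ne _ _ _ hij, fun k l hkl => ?_⟩
  apply Matrix.single_apply_of_ne
  rintro ⟨rfl, rfl⟩
  omega

end Parabolic

theorem parabolic_not_flat_sl_real_general (n : ℕ) (hn : 2 ≤ n)
    (Λ : Finset ℕ) :
    ∃ X Y Z : Matrix (Fin n) (Fin n) ℝ, inQ n Λ X ∧ inQ n Λ Y ∧ inQ n Λ Z ∧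
      nabSL n X (nabSL n Y Z) - nabSL n Y (nabSL n X Z) - nabSL n ⁅X, Y⁆ Z ≠ 0 := by
  let i : Fin n := ⟨0, by omega⟩
  let j : Fin n := ⟨1, by omega⟩
  have hij : i ≠ j := by simp [i, j, Fin.ext_iff]
  have hn₀ : (n : ℝ) ≠ 0 := by positivity
  have hQH : inQ n Λ (cartanH n i) :=
    inQ_of_apply_of_ne_eq_zero (trace_cartanH hn₀) fun _ _ => cartanH_apply_of_ne
  refine ⟨Matrix.single i j 1, cartanH n i, cartanH n i,
    inQ_single_of_blk_eq_zero (blk_eq_zero_of_val_eq_zero rfl) hij 1, hQH, hQH, ?_⟩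
  rw [← curvSL, curvSL_eq_smul hn₀ (Matrix.trace_single_eq_of_ne _ _ _ hij) (trace_cartanH hn₀)
    (single_mul_cartanH hij) cartanH_mul_single cartanH_mul_self]
  have hcoeff : -(n : ℝ)⁻¹ * (1 - 2 * (n : ℝ)⁻¹ - -(n : ℝ)⁻¹) ≠ 0 := by
    have h2n : (2 : ℝ) ≤ n := by exact_mod_cast hn
    have : (n : ℝ)⁻¹ < 1 := inv_lt_one_of_one_lt₀ (by linarith)
    have : 0 < (n : ℝ)⁻¹ := by positivity
    nlinarith
  refine smul_ne_zero hcoeff fun h => (one_ne_zero : (1 : ℝ) ≠ 0) ?_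
  simpa using congrFun (congrFun h i) j

/-- For `n ≥ 2` and a proper subset `Λ'` of `{1,…,n−1}`, the product
`∇_X Y = XY − (tr(XY)/n)·I_n` restricted to the parabolic subalgebra `q_{Λ'}` is not
flat: some `X, Y, Z ∈ q_{Λ'}` have nonvanishing curvature. -/
theorem parabolic_not_flat_sl_real (n : ℕ) (hn : 2 ≤ n)
    (Λ : Finset ℕ) (hΛ : Λ ⊆ Finset.Icc 1 (n - 1)) (hΛne : Λ ≠ Finset.Icc 1 (n - 1)) :
    ∃ X Y Z : Matrix (Fin n) (Fin n) ℝ, inQ n Λ X ∧ inQ n Λ Y ∧ inQ n Λ Z ∧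
      nabSL n X (nabSL n Y Z) - nabSL n Y (nabSL n X Z) - nabSL n ⁅X, Y⁆ Z ≠ 0 :=
  parabolic_not_flat_sl_real_general n hn Λ

end
end

section
/- Let n ≥ 2 and let Λ' = {i_1 < i_2 < ⋯ < i_m} be a proper subset of {1,…,n−1} satisfying i_1 = 1, i_m = n−1, and i_{r+1} − i_r ≤ 2 for all 1 ≤ r ≤ m−1. Let q_{Λ'} ⊆ sl(n,ℝ) be the associated parabolic subalgebra with the induced product ∇_X Y := XY − (tr(XY)/n)·I_n. Then there is NO ℝ-linear functional λ : q_{Λ'} → ℝ such that the modified product ∇^λ_X Y := ∇_X Y + λ(X)·Y + λ(Y)·X has identically vanishing curvature on q_{Λ'}; i.e. ∇ on q_{Λ'} is not projectively equivalent to any left-invariant flat affine connection. -/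
/-!
For `i ≠ j` in the same diagonal block of `q_{Λ'}`, the matrices `X = E_ii − E_jj`, `Y = E_ij`,
`Z = E_ji` all lie in `q_{Λ'}`. On trace-zero matrices the curvature of `∇^λ` is
`R^λ(X,Y)Z = g(Y,Z) X − g(X,Z) Y − λ([X,Y]) Z`
with `g(A,B) = λ(∇_A B) + λ(A)λ(B) − tr(AB)/n`. For the triple above, `[X,Y] = 2E_ij`, so the
`(j,i)` entry of `R^λ(X,Y)Z = 0` gives `λ(E_ij) = 0`, and then the `(i,i)` entry gives
`λ(E_ii) = (λ(I) + 1)/n`. The gap condition on `Λ'` means no two consecutive indices are missing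
from `Λ'`, so every block has at least two indices and this holds for every `i`. Summing over `i`
gives `λ(I) = λ(I) + 1`.
-/

noncomputable section

/-- The projectively modified product `∇^λ_X Y = ∇_X Y + λ(X)·Y + λ(Y)·X`. -/
def nabLam (n : ℕ) (lam : Matrix (Fin n) (Fin n) ℝ →ₗ[ℝ] ℝ)
    (X Y : Matrix (Fin n) (Fin n) ℝ) : Matrix (Fin n) (Fin n) ℝ :=
  nabSL n X Y + lam X • Y + lam Y • X

/-- The condition on `Λ' = {i₁ < i₂ < ⋯ < i_m} ⊆ {1,…,n−1}` that `i₁ = 1`,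
`i_m = n−1`, and consecutive elements differ by at most `2`. -/
def denseChain (n : ℕ) (Λ : Finset ℕ) : Prop :=
  1 ∈ Λ ∧ (n - 1) ∈ Λ ∧ ∀ a ∈ Λ, a ≠ n - 1 → ∃ c ∈ Λ, a < c ∧ c ≤ a + 2

open Matrix

def nabLamCurvature (n : ℕ) (lam : Matrix (Fin n) (Fin n) ℝ →ₗ[ℝ] ℝ)
    (X Y Z : Matrix (Fin n) (Fin n) ℝ) : Matrix (Fin n) (Fin n) ℝ :=
  nabLam n lam X (nabLam n lam Y Z) - nabLam n lam Y (nabLam n lam X Z) - nabLam n lam ⁅X, Y⁆ Z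

lemma nabLamCurvature_eq (n : ℕ) (lam : Matrix (Fin n) (Fin n) ℝ →ₗ[ℝ] ℝ)
    {X Y Z : Matrix (Fin n) (Fin n) ℝ} (hX : trace X = 0) (hY : trace Y = 0) :
    nabLamCurvature n lam X Y Z
      = (lam (nabSL n Y Z) + lam Y * lam Z - trace (Y * Z) / n) • X
        - (lam (nabSL n X Z) + lam X * lam Z - trace (X * Z) / n) • Y
        - lam ⁅X, Y⁆ • Z := by
  simp only [nabLamCurvature, nabLam, nabSL, Ring.lie_def, map_add, map_sub, map_smul,
    smul_eq_mul, Matrix.mul_add, Matrix.mul_sub, Matrix.sub_mul, mul_smul_comm,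
    Matrix.mul_one, trace_add, trace_sub, trace_smul, hX, hY, mul_zero, sub_zero, mul_assoc]
  simp only [trace_mul_comm Y X]
  module

lemma lam_single_diag_of_nabLamCurvature_eq_zero {n : ℕ}
    (lam : Matrix (Fin n) (Fin n) ℝ →ₗ[ℝ] ℝ) {i j : Fin n} (hij : i ≠ j)
    (hR : nabLamCurvature n lam (single i i 1 - single j j 1) (single i j 1) (single j i 1) = 0) :
    lam (single i i 1) = (lam 1 + 1) / n := by
  have hbr : ⁅single i i (1 : ℝ) - single j j 1, single i j (1 : ℝ)⁆
      = single i j 1 + single i j 1 := by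
    simp [Ring.lie_def, Matrix.sub_mul, Matrix.mul_sub, single_mul_single_of_ne, hij.symm]
  rw [nabLamCurvature_eq n lam (by simp) (trace_single_eq_of_ne _ _ _ hij), hbr] at hR
  have hji := congr_fun₂ hR j i
  have hii := congr_fun₂ hR i i
  simp only [nabSL, single_mul_single_same, mul_one, trace_single_eq_same, one_div, map_sub,
    map_smul, smul_eq_mul, smul_single, map_add, Matrix.sub_apply, Matrix.smul_apply, hij,
    and_true, not_false_eq_true, single_apply_of_ne, hij.symm, and_false, sub_self, mul_zero,
    and_self, single_apply_same, zero_sub, neg_add_rev, Matrix.zero_apply, add_self_eq_zero,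
    neg_eq_zero, sub_zero] at hji hii
  rw [hji, zero_mul, add_zero] at hii
  linear_combination hii

lemma blk_eq_of_succ_mem (Λ : Finset ℕ) {n : ℕ} {a b : Fin n} (hab : (b : ℕ) = a + 1)
    (hb : (b : ℕ) ∈ Λ) : blk Λ b = blk Λ a := by
  rw [blk, blk, hab, ← Finset.insert_Icc_right_eq_Icc_add_one (Nat.le_add_left 1 a),
    Finset.filter_insert, if_neg (by rwa [← hab, not_not])]

lemma denseChain.mem_or_succ_mem {n : ℕ} {Λ : Finset ℕ} (h : denseChain n Λ) {m : ℕ}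
    (hm : 1 ≤ m) (hmn : m ≤ n - 1) : m ∈ Λ ∨ m + 1 ∈ Λ := by
  induction m, hm using Nat.le_induction with
  | base => exact .inl h.1
  | succ m hm ih =>
    rcases ih (by omega) with hmΛ | hmΛ
    · by_cases hsucc : m + 1 ∈ Λ
      · exact .inl hsucc
      obtain ⟨c, hcΛ, hmc, hcm⟩ := h.2.2 m hmΛ (by omega)
      obtain rfl : c = m + 2 := by
        by_contra hc
        exact hsucc (by rwa [show c = m + 1 by omega] at hcΛ)
      exact .inr hcΛ
    · exact .inl hmΛ

lemma denseChain.exists_ne_blk_eq {n : ℕ} {Λ : Finset ℕ} (h : denseChain n Λ) (hn : 2 ≤ n)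
    (i : Fin n) : ∃ j, j ≠ i ∧ blk Λ j = blk Λ i := by
  by_cases hsucc : (i : ℕ) + 1 < n ∧ (i : ℕ) + 1 ∈ Λ
  · exact ⟨⟨i + 1, hsucc.1⟩, by simp [Fin.ext_iff], blk_eq_of_succ_mem Λ rfl hsucc.2⟩
  have hi1 : 1 ≤ (i : ℕ) := by
    by_contra hi
    exact hsucc ⟨by omega, by simpa [show (i : ℕ) = 0 by omega] using h.1⟩
  have hiΛ : (i : ℕ) ∈ Λ := by
    rcases eq_or_lt_of_le (Nat.le_sub_one_of_lt i.isLt) with hi | hi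
    · exact hi ▸ h.2.1
    · exact (h.mem_or_succ_mem hi1 hi.le).resolve_right fun hΛ => hsucc ⟨by omega, hΛ⟩
  exact ⟨⟨i - 1, by omega⟩, by simp [Fin.ext_iff]; omega,
    (blk_eq_of_succ_mem Λ (by simp; omega) hiΛ).symm⟩

lemma inQ_single {n : ℕ} {Λ : Finset ℕ} {i j : Fin n} (hij : i ≠ j)
    (hblk : blk Λ i ≤ blk Λ j) (c : ℝ) : inQ n Λ (single i j c) :=
  ⟨trace_single_eq_of_ne _ _ _ hij, fun a b hab =>
    single_apply_of_ne _ _ _ _ _ (by rintro ⟨rfl, rfl⟩; omega)⟩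

lemma inQ_single_sub_single {n : ℕ} (Λ : Finset ℕ) (i j : Fin n) (c : ℝ) :
    inQ n Λ (single i i c - single j j c) :=
  ⟨by simp, fun a b hab => by
    have hne : a ≠ b := by rintro rfl; omega
    rw [Matrix.sub_apply, single_apply_of_ne _ _ _ _ _ (fun h => hne (h.1.symm.trans h.2)),
      single_apply_of_ne _ _ _ _ _ (fun h => hne (h.1.symm.trans h.2)), sub_zero]⟩

theorem parabolic_not_projectively_flat_to_flat_general (n : ℕ) (hn : 2 ≤ n)
    (Λ : Finset ℕ) (hchain : denseChain n Λ) :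
    ¬ ∃ lam : Matrix (Fin n) (Fin n) ℝ →ₗ[ℝ] ℝ,
      ∀ X Y Z : Matrix (Fin n) (Fin n) ℝ, inQ n Λ X → inQ n Λ Y → inQ n Λ Z →
        nabLam n lam X (nabLam n lam Y Z) - nabLam n lam Y (nabLam n lam X Z)
          - nabLam n lam ⁅X, Y⁆ Z = 0 := by
  rintro ⟨lam, hflat⟩
  have hdiag (i : Fin n) : lam (single i i 1) = (lam 1 + 1) / n := by
    obtain ⟨j, hji, hblk⟩ := hchain.exists_ne_blk_eq hn i
    exact lam_single_diag_of_nabLamCurvature_eq_zero lam hji.symm <|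
      hflat _ _ _ (inQ_single_sub_single Λ i j 1) (inQ_single hji.symm hblk.ge 1)
        (inQ_single hji hblk.le 1)
  have hn0 : (n : ℝ) ≠ 0 := Nat.cast_ne_zero.mpr (by omega)
  have : lam 1 = lam 1 + 1 := calc
    lam 1 = ∑ i : Fin n, lam (single i i 1) := by rw [← map_sum, sum_single_one]
    _ = n * ((lam 1 + 1) / n) := by simp [hdiag]
    _ = lam 1 + 1 := mul_div_cancel₀ _ hn0
  linarith

/-- For `n ≥ 2` and a proper subset `Λ' = {i₁ < ⋯ < i_m}` of
`{1,…,n−1}` with `i₁ = 1`, `i_m = n−1` and consecutive gaps at most `2`, there is no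
linear functional `λ` making the modified product `∇^λ` flat on the parabolic
subalgebra `q_{Λ'}`: the induced connection on `q_{Λ'}` is not projectively
equivalent to any left-invariant flat affine connection. -/
theorem parabolic_not_projectively_flat_to_flat (n : ℕ) (hn : 2 ≤ n)
    (Λ : Finset ℕ) (hΛ : Λ ⊆ Finset.Icc 1 (n - 1)) (hΛne : Λ ≠ Finset.Icc 1 (n - 1))
    (hchain : denseChain n Λ) :
    ¬ ∃ lam : Matrix (Fin n) (Fin n) ℝ →ₗ[ℝ] ℝ,
      ∀ X Y Z : Matrix (Fin n) (Fin n) ℝ, inQ n Λ X → inQ n Λ Y → inQ n Λ Z →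
        nabLam n lam X (nabLam n lam Y Z) - nabLam n lam Y (nabLam n lam X Z)
          - nabLam n lam ⁅X, Y⁆ Z = 0 :=
  parabolic_not_projectively_flat_to_flat_general n hn Λ hchain

end
end
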